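/- Let 0 < β ≤ α < π and let θ ∈ ℝ. If either 0 < θ < α − β, or α + β < θ < 2π − α − β, then the series ∑_{m=1}^{∞} sin(mα) sin(mβ) sin(mθ)/m converges and its sum equals 0. -/

import Mathlib

open scoped Real
open Filter Finset Topology

/-!
By the product-to-sum formula, `sin (mα) sin (mβ) sin (mθ)` is a combination of `sin (m x)` for the
four arguments `x = θ ± α ± β`, so the series splits into four sawtooth series `∑ sin (m x) / m`.
For `0 < x < 2π` the sawtooth series converges by Dirichlet's test, and Abel's limit theorem
identifies its sum as `Im (-log (1 - e^{ix})) = (π - x) / 2`; by oddness it is `-(π + x) / 2` for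
`-2π < x < 0`. Under either hypothesis on `θ` the four arguments fall into these ranges in a pattern
that makes the four affine limits cancel.
-/

lemma norm_geom_sum_le_two_div {𝕜 : Type*} [NormedDivisionRing 𝕜] {z : 𝕜} (hz : ‖z‖ ≤ 1)
    (hz1 : z ≠ 1) (n : ℕ) : ‖∑ i ∈ range n, z ^ i‖ ≤ 2 / ‖z - 1‖ := by
  rw [geom_sum_eq hz1, norm_div]
  gcongr
  calc ‖z ^ n - 1‖ ≤ ‖z‖ ^ n + ‖(1 : 𝕜)‖ := by rw [← norm_pow]; exact norm_sub_le _ _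
    _ ≤ 2 := by rw [norm_one]; linarith [pow_le_one₀ (n := n) (norm_nonneg z) hz]

namespace Complex

lemma cauchySeq_sum_range_pow_div {z : ℂ} (hz : ‖z‖ ≤ 1) (hz1 : z ≠ 1) :
    CauchySeq fun n ↦ ∑ i ∈ range n, z ^ i / i := by
  have hbound (n : ℕ) : ‖∑ i ∈ range n, z ^ (i + 1)‖ ≤ 2 / ‖z - 1‖ := by
    simp_rw [pow_succ', ← mul_sum, norm_mul]
    exact (mul_le_of_le_one_left (norm_nonneg _) hz).trans (norm_geom_sum_le_two_div hz hz1 n)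
  have hanti : Antitone fun i : ℕ ↦ 1 / ((i : ℝ) + 1) := fun a b hab ↦
    one_div_le_one_div_of_le (by positivity) (by exact_mod_cast Nat.add_le_add_right hab 1)
  -- the `i = 0` term is `0 / 0 = 0`; after a shift, Dirichlet's test applies with weights `1/(i+1)`
  rw [← cauchySeq_shift 1]
  convert hanti.cauchySeq_series_mul_of_tendsto_zero_of_bounded
    tendsto_one_div_add_atTop_nhds_zero_nat hbound using 2 with n
  rw [sum_range_succ']
  simp [real_smul, div_eq_inv_mul]

lemma one_sub_mem_slitPlane {z : ℂ} (hz : ‖z‖ ≤ 1) (hz1 : z ≠ 1) : 1 - z ∈ slitPlane := by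
  rw [mem_slitPlane_iff, sub_re, one_re, sub_im, one_im, zero_sub, neg_ne_zero, sub_pos]
  by_contra! h
  exact hz1 (ext (by simp only [one_re]; linarith [re_le_norm z]) h.2)

theorem tendsto_sum_range_pow_div {z : ℂ} (hz : ‖z‖ ≤ 1) (hz1 : z ≠ 1) :
    Tendsto (fun n ↦ ∑ i ∈ range n, z ^ i / i) atTop (𝓝 (-log (1 - z))) := by
  obtain ⟨l, hl⟩ := cauchySeq_tendsto_of_complete (cauchySeq_sum_range_pow_div hz hz1)
  suffices l = -log (1 - z) from this ▸ hl
  have hofReal : Tendsto ofReal (𝓝[<] 1) (𝓝 1) := by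
    simpa using (continuous_ofReal.tendsto (1 : ℝ)).mono_left nhdsWithin_le_nhds
  have hlog : Tendsto (fun w : ℂ ↦ -log (1 - w * z)) ((𝓝[<] 1).map ofReal) (𝓝 (-log (1 - z))) := by
    have : ContinuousAt (fun w : ℂ ↦ -log (1 - w * z)) 1 :=
      ((continuousAt_clog (by simpa using one_sub_mem_slitPlane hz hz1)).comp
        (by fun_prop)).neg
    simpa using this.tendsto.comp hofReal
  -- Abel: the limit is also the radial limit of the Taylor series `∑ (r z)^n / n = -log (1 - r z)`
  refine tendsto_nhds_unique ((tendsto_tsum_powerSeries_nhdsWithin_lt hl).congr' ?_) hlog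
  filter_upwards [Filter.image_mem_map (Ioo_mem_nhdsLT (show (0:ℝ) < 1 by norm_num))]
  rintro _ ⟨r, ⟨hr0, hr1⟩, rfl⟩
  have hrz : ‖(r : ℂ) * z‖ < 1 := by
    rw [norm_mul, norm_real, Real.norm_of_nonneg hr0.le]
    nlinarith [norm_nonneg z]
  rw [← (hasSum_taylorSeries_neg_log hrz).tsum_eq]
  congr 1 with n
  ring

lemma one_sub_exp_mul_I (x : ℝ) :
    1 - exp (x * I) = (2 * Real.sin (x / 2) : ℝ) * exp ((x - π) / 2 * I) := by
  have hsq : exp (x * I) = exp (x / 2 * I) ^ 2 := by rw [← exp_nat_mul]; ring_nf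
  have hinv : exp (-(x / 2) * I) * exp (x / 2 * I) = 1 := by rw [← exp_add]; simp
  have hrot : exp ((x - π) / 2 * I) = -I * exp (x / 2 * I) := by
    rw [show (x - π) / 2 * I = -(π / 2 * I) + x / 2 * I by ring, exp_add, exp_neg,
      exp_mul_I, cos_pi_div_two, sin_pi_div_two]
    simp
  rw [hrot, hsq, ofReal_mul, ofReal_sin, sin]
  push_cast
  linear_combination -hinv + (exp (-(x / 2) * I) * exp (x / 2 * I) - exp (x / 2 * I) ^ 2) * I_sq

lemma arg_one_sub_exp_mul_I {x : ℝ} (hx0 : 0 < x) (hx : x < 2 * π) :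
    arg (1 - exp (x * I)) = (x - π) / 2 := by
  rw [one_sub_exp_mul_I, arg_real_mul _ (mul_pos two_pos (Real.sin_pos_of_pos_of_lt_pi
    (half_pos hx0) (by linarith))), ← ofReal_ofNat, ← ofReal_sub, ← ofReal_div, arg_exp_mul_I,
    toIocMod_eq_self]
  constructor <;> linarith

end Complex

namespace Real

theorem tendsto_sum_Icc_sin_mul_div_of_pos {x : ℝ} (hx0 : 0 < x) (hx : x < 2 * π) :
    Tendsto (fun N : ℕ ↦ ∑ m ∈ Icc 1 N, sin (m * x) / m) atTop (𝓝 ((π - x) / 2)) := by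
  have hz1 : Complex.exp (x * Complex.I) ≠ 1 := by
    rw [ne_comm, ← sub_ne_zero, Complex.one_sub_exp_mul_I]
    exact mul_ne_zero (Complex.ofReal_ne_zero.2
      (mul_pos two_pos (sin_pos_of_pos_of_lt_pi (half_pos hx0) (by linarith))).ne')
      (Complex.exp_ne_zero _)
  have hseries := (Complex.continuous_im.tendsto _).comp
    (Complex.tendsto_sum_range_pow_div (Complex.norm_exp_ofReal_mul_I x).le hz1)
  rw [Function.comp_def, Complex.neg_im, Complex.log_im,
    Complex.arg_one_sub_exp_mul_I hx0 hx, ← tendsto_add_atTop_iff_nat 1] at hseries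
  convert hseries using 2 with N
  · rw [Complex.im_sum, Nat.range_succ_eq_Icc_zero, ← insert_Icc_add_one_left_eq_Icc N.zero_le,
      sum_insert (by simp)]
    simp only [Nat.cast_zero, div_zero, Complex.zero_im, zero_add]
    refine sum_congr rfl fun m _ ↦ ?_
    rw [← Complex.exp_nat_mul, ← mul_assoc, Complex.div_natCast_im, ← Complex.ofReal_natCast,
      ← Complex.ofReal_mul, Complex.exp_ofReal_mul_I_im]
  · ring

theorem tendsto_sum_Icc_sin_mul_div_of_neg {x : ℝ} (hx0 : x < 0) (hx : -(2 * π) < x) :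
    Tendsto (fun N : ℕ ↦ ∑ m ∈ Icc 1 N, sin (m * x) / m) atTop (𝓝 (-(π + x) / 2)) := by
  convert (tendsto_sum_Icc_sin_mul_div_of_pos (x := -x) (by linarith) (by linarith)).neg using 2
  · simp [mul_neg, sin_neg, neg_div, sum_neg_distrib]
  · ring

lemma sin_mul_sin_mul_sin (a b c : ℝ) : sin a * sin b * sin c =
    (sin (c + a - b) + sin (c - a + b) - sin (c + a + b) - sin (c - a - b)) / 4 := by
  simp only [sin_add, sin_sub, cos_add, cos_sub]
  ring

end Real

/-- Outside the interval `[α - β, α + β]` (within `(0, 2π - α - β)`), the series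
`∑_{m ≥ 1} sin (m α) sin (m β) sin (m θ) / m` converges to `0`. -/
theorem sum_sin_sin_sin_div_eq_zero (α β θ : ℝ) (hβ0 : 0 < β) (hβα : β ≤ α) (hαπ : α < π)
    (h : (0 < θ ∧ θ < α - β) ∨ (α + β < θ ∧ θ < 2 * π - α - β)) :
    Filter.Tendsto
      (fun N : ℕ => ∑ m ∈ Finset.Icc 1 N,
        Real.sin (m * α) * Real.sin (m * β) * Real.sin (m * θ) / m)
      Filter.atTop (nhds 0) := by
  have hterm (m : ℕ) : Real.sin (m * α) * Real.sin (m * β) * Real.sin (m * θ) / m =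
      (Real.sin (m * (θ + α - β)) / m + Real.sin (m * (θ - α + β)) / m
        - Real.sin (m * (θ + α + β)) / m - Real.sin (m * (θ - α - β)) / m) / 4 := by
    rw [Real.sin_mul_sin_mul_sin]
    ring_nf
  simp_rw [hterm, ← sum_div, sum_sub_distrib, sum_add_distrib]
  have hπ := Real.pi_pos
  have pos := @Real.tendsto_sum_Icc_sin_mul_div_of_pos
  have neg := @Real.tendsto_sum_Icc_sin_mul_div_of_neg
  rcases h with ⟨h0, h1⟩ | ⟨h0, h1⟩
  · convert ((((pos (x := θ + α - β) (by linarith) (by linarith)).add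
      (neg (x := θ - α + β) (by linarith) (by linarith))).sub
      (pos (x := θ + α + β) (by linarith) (by linarith))).sub
      (neg (x := θ - α - β) (by linarith) (by linarith))).div_const 4 using 2
    ring
  · convert ((((pos (x := θ + α - β) (by linarith) (by linarith)).add
      (pos (x := θ - α + β) (by linarith) (by linarith))).sub
      (pos (x := θ + α + β) (by linarith) (by linarith))).sub
      (pos (x := θ - α - β) (by linarith) (by linarith))).div_const 4 using 2
    ring
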